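/- For every natural number m ≥ 1, the interval [2/(2m+1), 1] is contained in the set X(m) = { ∑_{n=1}^∞ ε_n/(2m+2)^n : ε_n ∈ {0, 2, 3, ..., 2m+1, 2m+3} for all n }. -/

import Mathlib

/-!
Write `b = 2m+2` and `A = 2/(2m+1)`, so that `b * A = 2 + A`. Iterating the Hutchinson operator
`S ↦ ⋃_d (d + S)/b` on `[0,1]` produces sets whose points lie within `b⁻ⁿ` of `X(m)`; since `X(m)`
is compact, a point lying in every iterate belongs to `X(m)`. The interval `[A,1]` alone is not
reproduced by the operator: after the digit `⌊b v⌋` the remainder may fall into the gap `[0,A)`.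
Such a remainder `z` is rescued either as it stands or, lowering the digit by one, as `1 + z`.
So the sets containing `[A,1]` and, for each `z ∈ [0,A]`, one of `z` and `1 + z`, are stable under
the operator, and `[0,1]` is one of them.
-/

/-- The digit set `{0, 2, 3, …, 2m+1, 2m+3}`. -/
def digits (m : ℕ) : Set ℝ :=
  {c | c = 0 ∨ c = 2 * m + 3 ∨ ∃ i : ℕ, 2 ≤ i ∧ i ≤ 2 * m + 1 ∧ c = i}

/-- The generalized Guthrie-Nymann Cantorval `X(m)`. -/
def Xm (m : ℕ) : Set ℝ :=
  {x | ∃ ε : ℕ → ℝ, (∀ n, ε n ∈ digits m) ∧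
    HasSum (fun n => ε n / (2 * m + 2) ^ (n + 1)) x}

open Set Filter Topology

def digitSums (b : ℝ) (D : Set ℝ) : Set ℝ :=
  {x | ∃ ε : ℕ → ℝ, (∀ n, ε n ∈ D) ∧ HasSum (fun n => ε n / b ^ (n + 1)) x}

def hutchinson (b : ℝ) (D S : Set ℝ) : Set ℝ :=
  {x | ∃ d ∈ D, ∃ y ∈ S, x = (d + y) / b}

section digitSums

variable {b : ℝ} {D : Set ℝ}

theorem zero_mem_digitSums (hD : 0 ∈ D) : 0 ∈ digitSums b D :=
  ⟨0, fun _ => hD, by simp [hasSum_zero]⟩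

theorem add_div_mem_digitSums {d x : ℝ} (hd : d ∈ D) (hx : x ∈ digitSums b D) :
    (d + x) / b ∈ digitSums b D := by
  obtain ⟨ε, hε, hsum⟩ := hx
  refine ⟨fun | 0 => d | n + 1 => ε n, fun | 0 => hd | n + 1 => hε n, ?_⟩
  rw [← hasSum_nat_add_iff' 1, Finset.sum_range_one]
  dsimp only
  rw [zero_add, pow_one, ← sub_div, add_sub_cancel_left]
  simpa only [div_div, ← pow_succ] using hsum.div_const b

theorem isClosed_digitSums (hb : 1 < b) (hD : IsCompact D) : IsClosed (digitSums b D) := by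
  obtain ⟨C, hC⟩ := hD.isBounded.exists_norm_le
  have : CompactSpace D := isCompact_iff_compactSpace.mp hD
  have hbound : ∀ n (ω : ℕ → D), ‖(ω n : ℝ) / b ^ (n + 1)‖ ≤ C * (b⁻¹) ^ (n + 1) := by
    intro n ω
    rw [norm_div, norm_pow, Real.norm_of_nonneg (zero_le_one.trans hb.le), inv_pow,
      ← div_eq_mul_inv]
    exact div_le_div_of_nonneg_right (hC _ (ω n).2) (by positivity)
  have hsummable : Summable fun n => C * (b⁻¹) ^ (n + 1) :=
    ((summable_nat_add_iff 1).mpr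
      (summable_geometric_of_lt_one (by positivity) (inv_lt_one_of_one_lt₀ hb))).mul_left C
  have hrange : digitSums b D = range fun ω : ℕ → D => ∑' n, (ω n : ℝ) / b ^ (n + 1) := by
    ext x
    constructor
    · rintro ⟨ε, hε, hsum⟩
      exact ⟨fun n => ⟨ε n, hε n⟩, hsum.tsum_eq⟩
    · rintro ⟨ω, rfl⟩
      exact ⟨fun n => ω n, fun n => (ω n).2,
        (Summable.of_norm_bounded hsummable fun n => hbound n ω).hasSum⟩
  rw [hrange]
  exact (isCompact_range (continuous_tsum (fun n => by fun_prop) hsummable hbound)).isClosed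

theorem mem_hutchinson_iff {S : Set ℝ} {x : ℝ} (hb : b ≠ 0) :
    x ∈ hutchinson b D S ↔ ∃ d ∈ D, b * x - d ∈ S := by
  constructor
  · rintro ⟨d, hd, y, hy, rfl⟩
    refine ⟨d, hd, ?_⟩
    rwa [mul_div_cancel₀ _ hb, add_sub_cancel_left]
  · rintro ⟨d, hd, hy⟩
    refine ⟨d, hd, _, hy, ?_⟩
    rw [add_sub_cancel, mul_div_cancel_left₀ _ hb]

theorem exists_dist_le_of_mem_hutchinson_iterate {S : Set ℝ} {r : ℝ} (hb : 0 < b)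
    (hS : ∀ y ∈ S, ∃ x ∈ digitSums b D, dist y x ≤ r) (n : ℕ) :
    ∀ y ∈ (hutchinson b D)^[n] S, ∃ x ∈ digitSums b D, dist y x ≤ r / b ^ n := by
  induction n with
  | zero => simpa using hS
  | succ n ih =>
    rw [Function.iterate_succ_apply']
    rintro _ ⟨d, hd, y, hy, rfl⟩
    obtain ⟨x, hx, hyx⟩ := ih y hy
    refine ⟨(d + x) / b, add_div_mem_digitSums hd hx, ?_⟩
    rw [Real.dist_eq, ← sub_div, add_sub_add_left_eq_sub, abs_div, abs_of_pos hb, pow_succ,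
      ← div_div, ← Real.dist_eq]
    gcongr

theorem mem_digitSums_of_forall_mem_hutchinson_iterate {S : Set ℝ} {r v : ℝ} (hb : 1 < b)
    (hD : IsCompact D) (hS : ∀ y ∈ S, ∃ x ∈ digitSums b D, dist y x ≤ r)
    (hv : ∀ n, v ∈ (hutchinson b D)^[n] S) : v ∈ digitSums b D := by
  rw [← (isClosed_digitSums hb hD).closure_eq, Metric.mem_closure_iff]
  intro δ hδ
  have hlim : Tendsto (fun n : ℕ => r / b ^ n) atTop (𝓝 0) :=
    tendsto_const_nhds.div_atTop (tendsto_pow_atTop_atTop_of_one_lt hb)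
  obtain ⟨n, hn⟩ := (hlim.eventually (gt_mem_nhds hδ)).exists
  obtain ⟨x, hx, hvx⟩ := exists_dist_le_of_mem_hutchinson_iterate (by linarith) hS n v (hv n)
  exact ⟨x, hx, hvx.trans_lt hn⟩

end digitSums

section digits

variable {m : ℕ}

theorem Xm_eq_digitSums (m : ℕ) : Xm m = digitSums (2 * m + 2) (digits m) := rfl

theorem natCast_mem_digits {k : ℕ} (h2 : 2 ≤ k) (hk : k ≤ 2 * m + 1) : (k : ℝ) ∈ digits m :=
  Or.inr (Or.inr ⟨k, h2, hk, rfl⟩)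

theorem zero_mem_digits : (0 : ℝ) ∈ digits m := Or.inl rfl

theorem two_mem_digits (hm : 1 ≤ m) : (2 : ℝ) ∈ digits m := by
  exact_mod_cast natCast_mem_digits (m := m) le_rfl (by omega)

theorem two_mul_add_one_mem_digits (hm : 1 ≤ m) : 2 * (m : ℝ) + 1 ∈ digits m := by
  exact_mod_cast natCast_mem_digits (m := m) (by omega) le_rfl

theorem two_mul_add_three_mem_digits : 2 * (m : ℝ) + 3 ∈ digits m := Or.inr (Or.inl rfl)

theorem digits_subset_image_natCast (m : ℕ) :
    digits m ⊆ (Nat.cast : ℕ → ℝ) '' Iic (2 * m + 3) := by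
  rintro c (rfl | rfl | ⟨i, -, hi, rfl⟩)
  · exact ⟨0, by simp, Nat.cast_zero⟩
  · exact ⟨2 * m + 3, mem_Iic.mpr le_rfl, by push_cast; ring⟩
  · exact ⟨i, by simp only [mem_Iic]; omega, rfl⟩

theorem isCompact_digits (m : ℕ) : IsCompact (digits m) :=
  (((finite_Iic _).image _).subset (digits_subset_image_natCast m)).isCompact

theorem exists_nat_sub_mem_Icc {u : ℝ} (hm : 1 ≤ m) (hu : u ∈ Icc 2 (2 * (m : ℝ) + 2)) :
    ∃ k : ℕ, 2 ≤ k ∧ k ≤ 2 * m + 1 ∧ u - k ∈ Icc (0 : ℝ) 1 := by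
  rcases hu.2.lt_or_eq with hlt | rfl
  · have hu0 : 0 ≤ u := by linarith [hu.1]
    refine ⟨⌊u⌋₊, Nat.le_floor (by exact_mod_cast hu.1), ?_, ?_, ?_⟩
    · have : ⌊u⌋₊ < 2 * m + 2 := (Nat.floor_lt hu0).mpr (by exact_mod_cast hlt)
      omega
    · linarith [Nat.floor_le hu0]
    · linarith [Nat.lt_floor_add_one u]
  · exact ⟨2 * m + 1, by omega, le_rfl, by push_cast; constructor <;> linarith⟩

theorem two_div_two_mul_add_one_le_one (hm : 1 ≤ m) : 2 / (2 * (m : ℝ) + 1) ≤ 1 := by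
  rw [div_le_one (by positivity)]
  linarith [show (1 : ℝ) ≤ m by exact_mod_cast hm]

def IsAdmissible (m : ℕ) (S : Set ℝ) : Prop :=
  Icc (2 / (2 * (m : ℝ) + 1)) 1 ⊆ S ∧ ∀ z ∈ Icc 0 (2 / (2 * (m : ℝ) + 1)), z ∈ S ∨ 1 + z ∈ S

theorem isAdmissible_Icc_zero_one (hm : 1 ≤ m) : IsAdmissible m (Icc 0 1) :=
  ⟨Icc_subset_Icc_left (by positivity), fun z hz =>
    .inl ⟨hz.1, hz.2.trans (two_div_two_mul_add_one_le_one hm)⟩⟩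

namespace IsAdmissible

variable {S : Set ℝ} {u : ℝ}

theorem exists_digit_sub_mem (hm : 1 ≤ m) (hS : IsAdmissible m S)
    (hu : u ∈ Icc (2 + 2 / (2 * (m : ℝ) + 1)) (2 * m + 2)) : ∃ d ∈ digits m, u - d ∈ S := by
  have hA : 0 < 2 / (2 * (m : ℝ) + 1) := by positivity
  obtain ⟨k, hk2, hk, hku⟩ := exists_nat_sub_mem_Icc hm ⟨by linarith [hu.1], hu.2⟩
  rcases le_or_gt (2 / (2 * (m : ℝ) + 1)) (u - k) with hgap | hgap
  · exact ⟨k, natCast_mem_digits hk2 hk, hS.1 ⟨hgap, hku.2⟩⟩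
  have hk3 : 3 ≤ k := by
    have : (2 : ℝ) < k := by linarith [hu.1]
    exact_mod_cast this
  rcases hS.2 (u - k) ⟨hku.1, hgap.le⟩ with h | h
  · exact ⟨k, natCast_mem_digits hk2 hk, h⟩
  · refine ⟨(k - 1 : ℕ), natCast_mem_digits (by omega) (by omega), ?_⟩
    rw [Nat.cast_sub (by omega)]
    convert h using 1
    push_cast
    ring

-- For `u = (2m+2) z`, the two alternatives put `z`, respectively `1 + z`, into the image of `S`
-- under the Hutchinson operator.
theorem exists_digit_sub_mem_or (hm : 1 ≤ m) (hS : IsAdmissible m S)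
    (hu : u ∈ Icc 0 (2 + 2 / (2 * (m : ℝ) + 1))) :
    (∃ d ∈ digits m, u - d ∈ S) ∨ ∃ d ∈ digits m, 2 * m + 2 + u - d ∈ S := by
  set A := 2 / (2 * (m : ℝ) + 1)
  have hA : A ≤ 1 := two_div_two_mul_add_one_le_one hm
  have hb1 : 2 * (m : ℝ) + 2 + u - (2 * m + 1) = 1 + u := by ring
  have hb3 : 2 * (m : ℝ) + 2 + u - (2 * m + 3) = u - 1 := by ring
  rcases le_total u A with hu1 | hu1
  · rcases hS.2 u ⟨hu.1, hu1⟩ with h | h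
    · exact .inl ⟨0, zero_mem_digits, by rwa [sub_zero]⟩
    · exact .inr ⟨_, two_mul_add_one_mem_digits hm, by rwa [hb1]⟩
  rcases le_total u 1 with hu2 | hu2
  · exact .inl ⟨0, zero_mem_digits, by rw [sub_zero]; exact hS.1 ⟨hu1, hu2⟩⟩
  rcases le_total u (1 + A) with hu3 | hu3
  · rcases hS.2 (u - 1) ⟨by linarith, by linarith⟩ with h | h
    · exact .inr ⟨_, two_mul_add_three_mem_digits, by rwa [hb3]⟩
    · exact .inl ⟨0, zero_mem_digits, by rwa [sub_zero, ← add_sub_cancel 1 u]⟩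
  rcases le_total u 2 with hu4 | hu4
  · refine .inr ⟨_, two_mul_add_three_mem_digits, ?_⟩
    rw [hb3]
    exact hS.1 ⟨by linarith, by linarith⟩
  rcases hS.2 (u - 2) ⟨by linarith, by linarith [hu.2]⟩ with h | h
  · exact .inl ⟨2, two_mem_digits hm, h⟩
  · refine .inr ⟨_, two_mul_add_three_mem_digits, ?_⟩
    convert h using 1
    ring

theorem hutchinson (hm : 1 ≤ m) (hS : IsAdmissible m S) :
    IsAdmissible m (hutchinson (2 * m + 2) (digits m) S) := by
  have hb : 2 * (m : ℝ) + 2 ≠ 0 := by positivity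
  have hbA : (2 * (m : ℝ) + 2) * (2 / (2 * m + 1)) = 2 + 2 / (2 * m + 1) := by
    field_simp
    ring
  refine ⟨fun v hv => ?_, fun z hz => ?_⟩
  · rw [mem_hutchinson_iff hb]
    refine hS.exists_digit_sub_mem hm ⟨?_, ?_⟩
    · rw [← hbA]
      gcongr
      exact hv.1
    · nlinarith [hv.2]
  · simp only [mem_hutchinson_iff hb, mul_one_add]
    refine hS.exists_digit_sub_mem_or hm ⟨by nlinarith [hz.1], ?_⟩
    rw [← hbA]
    gcongr
    exact hz.2

end IsAdmissible

end digits

theorem Icc_subset_Xm :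
    ∀ m : ℕ, 1 ≤ m → Set.Icc (2 / (2 * (m : ℝ) + 1)) 1 ⊆ Xm m := by
  intro m hm v hv
  rw [Xm_eq_digitSums]
  have hadm : ∀ n, IsAdmissible m ((hutchinson (2 * m + 2) (digits m))^[n] (Icc 0 1)) := by
    intro n
    induction n with
    | zero => exact isAdmissible_Icc_zero_one hm
    | succ n ih =>
      rw [Function.iterate_succ_apply']
      exact ih.hutchinson hm
  refine mem_digitSums_of_forall_mem_hutchinson_iterate (r := 1) (by norm_cast; omega)
    (isCompact_digits m) (fun y hy => ?_) fun n => (hadm n).1 hv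
  refine ⟨0, zero_mem_digitSums zero_mem_digits, ?_⟩
  rw [Real.dist_0_eq_abs, abs_of_nonneg hy.1]
  exact hy.2
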